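/- arXiv:1606.09378 — 2 statements merged into one kernel-verified Lean document; each statement's English description precedes it below -/
import Mathlib

section
/- On ℝ^{2l+1}, if f and g are polynomials of degree at most 2 in the variables z, x₁,…,x_l, y₁,…,y_l, then the Lagrange bracket {f,g} = f g' - f' g - (1/2)Σ ω^{rs} T_r(f) T_s(g) (where h' = ∂_z h) is again a polynomial of degree at most 2. -/
noncomputable section

/-- A point of ℝ^m. -/
abbrev Pt (m : ℕ) := Fin m → ℝ

/-- A vector field on ℝ^m, given by its coefficient functions: X = ∑ᵢ Xⁱ ∂ᵢ. -/
abbrev VF (m : ℕ) := Fin m → Pt m → ℝ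

/-- Partial derivative ∂ₖ f(p). -/
def pd {m : ℕ} (k : Fin m) (f : Pt m → ℝ) (p : Pt m) : ℝ :=
  fderiv ℝ f p (Pi.single k 1)

/-- Action of the vector field X on the function f: (Xf)(p) = ∑ₖ Xᵏ(p) ∂ₖf(p). -/
def vfApply {m : ℕ} (X : VF m) (f : Pt m → ℝ) (p : Pt m) : ℝ :=
  ∑ k, X k p * pd k f p

/-- Commutator of vector fields, [X,Y]ᵏ = X(Yᵏ) - Y(Xᵏ). -/
def vfBracket {m : ℕ} (X Y : VF m) : VF m :=
  fun k p => vfApply X (Y k) p - vfApply Y (X k) p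

/-- A vector field is smooth if all its coefficients are. -/
def SmoothVF {m : ℕ} (X : VF m) : Prop := ∀ k, ContDiff ℝ (⊤ : ℕ∞) (X k)

/-- Index of the coordinate z of ℝ^{2l+1} (coordinates (z, x₁,…,x_l, y₁,…,y_l)). -/
def iz (l : ℕ) : Fin (2 * l + 1) := ⟨0, by omega⟩

/-- Index of the coordinate xᵢ. -/
def ix (l : ℕ) (i : Fin l) : Fin (2 * l + 1) := ⟨i.1 + 1, by have := i.isLt; omega⟩

/-- Index of the coordinate yᵢ. -/
def iy (l : ℕ) (i : Fin l) : Fin (2 * l + 1) := ⟨l + 1 + i.1, by have := i.isLt; omega⟩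

/-- Pointwise evaluation of the standard contact form
α = dz + ∑ᵢ (xᵢ dyᵢ - yᵢ dxᵢ) on a vector field. -/
def alphaEval (l : ℕ) (X : VF (2 * l + 1)) (p : Pt (2 * l + 1)) : ℝ :=
  X (iz l) p + ∑ i : Fin l, (p (ix l i) * X (iy l i) p - p (iy l i) * X (ix l i) p)

/-- The contact frame T_r: A_r = ∂_{x_r} + y_r ∂_z for r < l, and
T_{l+s} = -B_s = ∂_{y_s} - x_s ∂_z for the remaining indices. -/
def Tc (l : ℕ) (r : Fin (2 * l)) : VF (2 * l + 1) :=
  fun k p =>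
    if h : r.1 < l then
      (if k = ix l ⟨r.1, h⟩ then 1 else 0) + (if k = iz l then p (iy l ⟨r.1, h⟩) else 0)
    else
      (if k = iy l ⟨r.1 - l, by have := r.isLt; omega⟩ then 1 else 0) -
        (if k = iz l then p (ix l ⟨r.1 - l, by have := r.isLt; omega⟩) else 0)

/-- The matrix ω^{rs} = [[0, -I_l],[I_l, 0]]. -/
def wUp (l : ℕ) (r s : Fin (2 * l)) : ℝ :=
  if r.1 < l ∧ s.1 = r.1 + l then -1 else if s.1 < l ∧ r.1 = s.1 + l then 1 else 0

/-- The matrix ω_{rs} = [[0, I_l],[-I_l, 0]]. -/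
def wDown (l : ℕ) (r s : Fin (2 * l)) : ℝ :=
  if r.1 < l ∧ s.1 = r.1 + l then 1 else if s.1 < l ∧ r.1 = s.1 + l then -1 else 0

/-- The contact vector field X_f = f ∂_z - (1/2) ∑_{r,s} ω^{rs} T_r(f) T_s. -/
def Xc (l : ℕ) (f : Pt (2 * l + 1) → ℝ) : VF (2 * l + 1) :=
  fun k p => (if k = iz l then f p else 0) -
    (1 / 2) * ∑ r : Fin (2 * l), ∑ s : Fin (2 * l),
      wUp l r s * vfApply (Tc l r) f p * Tc l s k p

/-- The Lagrange bracket {f,g} = f g' - f' g - (1/2) ∑ ω^{rs} T_r(f) T_s(g). -/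
def lagr (l : ℕ) (f g : Pt (2 * l + 1) → ℝ) : Pt (2 * l + 1) → ℝ :=
  fun p => f p * pd (iz l) g p - pd (iz l) f p * g p -
    (1 / 2) * ∑ r : Fin (2 * l), ∑ s : Fin (2 * l),
      wUp l r s * vfApply (Tc l r) f p * vfApply (Tc l s) g p

/-- f is a polynomial of degree at most 2 in the coordinates. -/
def IsQuadPoly (m : ℕ) (f : Pt m → ℝ) : Prop :=
  ∃ (c : ℝ) (b : Fin m → ℝ) (a : Fin m → Fin m → ℝ),
    ∀ p, f p = c + (∑ i, b i * p i) + ∑ i, ∑ j, a i j * p i * p j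


open Finset

lemma pd_quad (m : ℕ) (c : ℝ) (b : Fin m → ℝ) (a : Fin m → Fin m → ℝ) (k : Fin m) (p : Pt m) :
    pd k (fun q => c + (∑ i, b i * q i) + ∑ i, ∑ j, a i j * q i * q j) p
      = b k + ∑ j, (a k j + a j k) * p j := by
  have hcoord : ∀ i : Fin m, HasFDerivAt (fun q : Pt m => q i)
      (ContinuousLinearMap.proj i : (Pt m) →L[ℝ] ℝ) p := fun i => hasFDerivAt_apply i p
  have hlin : HasFDerivAt (fun q : Pt m => ∑ i, b i * q i)
      (∑ i, b i • (ContinuousLinearMap.proj i : (Pt m) →L[ℝ] ℝ)) p :=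
    HasFDerivAt.fun_sum fun i _ => (hcoord i).const_mul (b i)
  have hq : HasFDerivAt (fun q : Pt m => ∑ i, ∑ j, a i j * q i * q j)
      (∑ i, ∑ j, ((a i j * p i) • (ContinuousLinearMap.proj j : (Pt m) →L[ℝ] ℝ)
        + p j • (a i j • (ContinuousLinearMap.proj i : (Pt m) →L[ℝ] ℝ)))) p :=
    HasFDerivAt.fun_sum fun i _ => HasFDerivAt.fun_sum fun j _ =>
      ((hcoord i).const_mul (a i j)).mul (hcoord j)
  have h := ((hasFDerivAt_const c p).fun_add hlin).fun_add hq
  rw [pd, h.fderiv]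
  simp only [ContinuousLinearMap.add_apply, ContinuousLinearMap.sum_apply,
    ContinuousLinearMap.smul_apply, ContinuousLinearMap.proj_apply,
    ContinuousLinearMap.zero_apply, Pi.single_apply, smul_eq_mul,
    mul_ite, mul_one, mul_zero, Finset.sum_ite_eq', Finset.mem_univ, if_true]
  rw [zero_add]
  simp only [Finset.sum_add_distrib]
  have h1 : ∀ x : Fin m, ∑ x1 : Fin m, (if x1 = k then a x x1 * p x else 0) = a x k * p x := by
    intro x; simp
  have h2 : ∑ x : Fin m, ∑ x1 : Fin m, (if x = k then p x1 * a x x1 else 0)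
      = ∑ x1 : Fin m, p x1 * a k x1 := by
    rw [Finset.sum_comm]
    exact Finset.sum_congr rfl fun x1 _ => by simp
  rw [h2]
  simp only [h1]
  congr 1
  rw [← Finset.sum_add_distrib]
  exact Finset.sum_congr rfl fun j _ => by ring

def IsAffPoly (m : ℕ) (f : Pt m → ℝ) : Prop :=
  ∃ (c : ℝ) (b : Fin m → ℝ), ∀ p, f p = c + ∑ i, b i * p i

lemma IsAffPoly.isQuad {m : ℕ} {f : Pt m → ℝ} (h : IsAffPoly m f) : IsQuadPoly m f := by
  obtain ⟨c, b, h⟩ := h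
  exact ⟨c, b, fun _ _ => 0, fun p => by simp [h p]⟩

lemma IsAffPoly.const_mul {m : ℕ} {f : Pt m → ℝ} (h : IsAffPoly m f) (e : ℝ) :
    IsAffPoly m (fun p => e * f p) := by
  obtain ⟨c, b, h⟩ := h
  refine ⟨e * c, fun i => e * b i, fun p => ?_⟩
  dsimp only
  rw [h p, mul_add, Finset.mul_sum]
  exact congrArg _ (Finset.sum_congr rfl fun i _ => by ring)

lemma IsAffPoly.sub {m : ℕ} {f g : Pt m → ℝ} (hf : IsAffPoly m f) (hg : IsAffPoly m g) :
    IsAffPoly m (fun p => f p - g p) := by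
  obtain ⟨c, b, hf⟩ := hf; obtain ⟨d, e, hg⟩ := hg
  refine ⟨c - d, fun i => b i - e i, fun p => ?_⟩
  dsimp only
  rw [hf p, hg p]
  have h1 : ∑ i, (b i - e i) * p i = (∑ i, b i * p i) - ∑ i, e i * p i := by
    rw [← Finset.sum_sub_distrib]
    exact Finset.sum_congr rfl fun i _ => by ring
  rw [h1]; ring

lemma IsAffPoly.mulQuad {m : ℕ} {f g : Pt m → ℝ} (hf : IsAffPoly m f) (hg : IsAffPoly m g) :
    IsQuadPoly m (fun p => f p * g p) := by
  obtain ⟨c, b, hf⟩ := hf; obtain ⟨d, e, hg⟩ := hg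
  refine ⟨c * d, fun i => c * e i + d * b i, fun i j => b i * e j, fun p => ?_⟩
  dsimp only
  rw [hf p, hg p]
  have h1 : ∑ i, (c * e i + d * b i) * p i
      = c * (∑ i, e i * p i) + d * (∑ i, b i * p i) := by
    rw [Finset.mul_sum, Finset.mul_sum, ← Finset.sum_add_distrib]
    exact Finset.sum_congr rfl fun i _ => by ring
  have h2 : ∑ i, ∑ j, (b i * e j) * p i * p j
      = (∑ i, b i * p i) * (∑ j, e j * p j) := by
    rw [Finset.sum_mul_sum]
    exact Finset.sum_congr rfl fun i _ => Finset.sum_congr rfl fun j _ => by ring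
  rw [h1, h2]; ring

lemma isQuad_add {m : ℕ} {f g : Pt m → ℝ} (hf : IsQuadPoly m f) (hg : IsQuadPoly m g) :
    IsQuadPoly m (fun p => f p + g p) := by
  obtain ⟨c, b, a, hf⟩ := hf; obtain ⟨d, e, k, hg⟩ := hg
  refine ⟨c + d, fun i => b i + e i, fun i j => a i j + k i j, fun p => ?_⟩
  dsimp only
  rw [hf p, hg p]
  have h1 : ∑ i, (b i + e i) * p i = (∑ i, b i * p i) + ∑ i, e i * p i := by
    rw [← Finset.sum_add_distrib]
    exact Finset.sum_congr rfl fun i _ => by ring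
  have h2 : ∑ i, ∑ j, (a i j + k i j) * p i * p j
      = (∑ i, ∑ j, a i j * p i * p j) + ∑ i, ∑ j, k i j * p i * p j := by
    rw [← Finset.sum_add_distrib]
    refine Finset.sum_congr rfl fun i _ => ?_
    rw [← Finset.sum_add_distrib]
    exact Finset.sum_congr rfl fun j _ => by ring
  rw [h1, h2]; ring

lemma isQuad_const_mul {m : ℕ} {f : Pt m → ℝ} (hf : IsQuadPoly m f) (e : ℝ) :
    IsQuadPoly m (fun p => e * f p) := by
  obtain ⟨c, b, a, hf⟩ := hf
  refine ⟨e * c, fun i => e * b i, fun i j => e * a i j, fun p => ?_⟩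
  dsimp only
  rw [hf p]
  have h1 : ∑ i, (e * b i) * p i = e * ∑ i, b i * p i := by
    rw [Finset.mul_sum]
    exact Finset.sum_congr rfl fun i _ => by ring
  have h2 : ∑ i, ∑ j, (e * a i j) * p i * p j = e * ∑ i, ∑ j, a i j * p i * p j := by
    rw [Finset.mul_sum]
    refine Finset.sum_congr rfl fun i _ => ?_
    rw [Finset.mul_sum]
    exact Finset.sum_congr rfl fun j _ => by ring
  rw [h1, h2]; ring

lemma isQuad_sub {m : ℕ} {f g : Pt m → ℝ} (hf : IsQuadPoly m f) (hg : IsQuadPoly m g) :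
    IsQuadPoly m (fun p => f p - g p) := by
  have := isQuad_add hf (isQuad_const_mul hg (-1))
  simpa [sub_eq_add_neg] using this

lemma isQuad_zero (m : ℕ) : IsQuadPoly m (fun _ => 0) :=
  ⟨0, fun _ => 0, fun _ _ => 0, fun p => by simp⟩

lemma isQuad_sum {m : ℕ} {ι : Type*} (s : Finset ι) (F : ι → Pt m → ℝ)
    (h : ∀ i ∈ s, IsQuadPoly m (F i)) :
    IsQuadPoly m (fun p => ∑ i ∈ s, F i p) := by
  classical
  induction s using Finset.induction_on with
  | empty => simpa using isQuad_zero m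
  | insert x s' hx ih =>
    simp only [Finset.sum_insert hx]
    exact isQuad_add (h x (Finset.mem_insert_self x s'))
      (ih fun i hi => h i (Finset.mem_insert_of_mem hi))

lemma sum_fin_two (l : ℕ) (G : Fin (2 * l) → ℝ) :
    ∑ j, G j = (∑ i : Fin l, G ⟨i.1, by omega⟩) + ∑ i : Fin l, G ⟨l + i.1, by omega⟩ := by
  have h : l + l = 2 * l := by omega
  rw [← Fintype.sum_equiv (finCongr h) (fun j => G (finCongr h j)) G (fun j => rfl)]
  rw [Fin.sum_univ_add]
  congr 1
  all_goals exact Finset.sum_congr rfl fun i _ => congrArg G (Fin.ext (by simp))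

lemma sum_fin_split (l : ℕ) (F : Fin (2 * l + 1) → ℝ) :
    ∑ k, F k = F (iz l) + ((∑ i : Fin l, F (ix l i)) + ∑ i : Fin l, F (iy l i)) := by
  rw [Fin.sum_univ_succ]
  congr 1
  rw [sum_fin_two l (fun j => F j.succ)]
  congr 1
  all_goals exact Finset.sum_congr rfl fun i _ =>
    congrArg F (Fin.ext (by simp [ix, iy]; try omega))

lemma wUp_mk_lt (l : ℕ) (i : Fin l) (s : Fin (2 * l)) :
    wUp l ⟨i.1, by omega⟩ s = if s.1 = i.1 + l then -1 else 0 := by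
  unfold wUp
  have h2 : ¬ (s.1 < l ∧ (⟨i.1, by omega⟩ : Fin (2 * l)).1 = s.1 + l) := by
    simp only; omega
  rcases eq_or_ne s.1 (i.1 + l) with h | h
  · rw [if_pos ⟨i.2, h⟩, if_pos h]
  · rw [if_neg (fun hc => h hc.2), if_neg h2, if_neg h]

lemma wUp_mk_ge (l : ℕ) (i : Fin l) (s : Fin (2 * l)) :
    wUp l ⟨l + i.1, by omega⟩ s = if s.1 = i.1 then 1 else 0 := by
  unfold wUp
  have h1 : ¬ ((⟨l + i.1, by omega⟩ : Fin (2 * l)).1 < l ∧ s.1 = (⟨l + i.1, by omega⟩ : Fin (2 * l)).1 + l) := by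
    simp only; omega
  rcases eq_or_ne s.1 i.1 with h | h
  · rw [if_neg h1, if_pos ⟨by omega, by simp only; omega⟩, if_pos h]
  · rw [if_neg h1, if_neg (by simp only; omega), if_neg h]

lemma wUp_sum (l : ℕ) (F G : Fin (2 * l) → ℝ) :
    (∑ r, ∑ s, wUp l r s * F r * G s)
      = ∑ i : Fin l, (F ⟨l + i.1, by omega⟩ * G ⟨i.1, by omega⟩
          - F ⟨i.1, by omega⟩ * G ⟨l + i.1, by omega⟩) := by
  rw [sum_fin_two l (fun r => ∑ s, wUp l r s * F r * G s)]
  have h1 : ∀ i : Fin l, (∑ s, wUp l ⟨i.1, by omega⟩ s * F ⟨i.1, by omega⟩ * G s)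
      = -(F ⟨i.1, by omega⟩ * G ⟨l + i.1, by omega⟩) := by
    intro i
    rw [Finset.sum_eq_single (⟨i.1 + l, by omega⟩ : Fin (2 * l))]
    · rw [wUp_mk_lt, if_pos rfl]
      have : (⟨i.1 + l, by omega⟩ : Fin (2 * l)) = ⟨l + i.1, by omega⟩ := Fin.ext (Nat.add_comm i.1 l)
      rw [this]; ring
    · intro s _ hs
      rw [wUp_mk_lt, if_neg (fun h => hs (Fin.ext h))]
      ring
    · simp
  have h2 : ∀ i : Fin l, (∑ s, wUp l ⟨l + i.1, by omega⟩ s * F ⟨l + i.1, by omega⟩ * G s)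
      = F ⟨l + i.1, by omega⟩ * G ⟨i.1, by omega⟩ := by
    intro i
    rw [Finset.sum_eq_single (⟨i.1, by omega⟩ : Fin (2 * l))]
    · rw [wUp_mk_ge, if_pos rfl]; ring
    · intro s _ hs
      rw [wUp_mk_ge, if_neg (fun h => hs (Fin.ext h))]
      ring
    · simp
  rw [Finset.sum_congr rfl fun i _ => h1 i, Finset.sum_congr rfl fun i _ => h2 i]
  rw [← Finset.sum_add_distrib]
  exact Finset.sum_congr rfl fun i _ => by ring

lemma vfApply_Tc_lt (l : ℕ) (i : Fin l) (f : Pt (2 * l + 1) → ℝ) (p : Pt (2 * l + 1)) :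
    vfApply (Tc l ⟨i.1, by omega⟩) f p
      = pd (ix l i) f p + p (iy l i) * pd (iz l) f p := by
  unfold vfApply Tc
  rw [Finset.sum_congr rfl (fun k _ => by
    rw [dif_pos (show ((⟨i.1, by omega⟩ : Fin (2 * l)).1 < l) from i.2)])]
  simp only [add_mul, ite_mul, one_mul, zero_mul, Finset.sum_add_distrib,
    Finset.sum_ite_eq', Finset.mem_univ, if_true]

lemma vfApply_Tc_ge (l : ℕ) (i : Fin l) (f : Pt (2 * l + 1) → ℝ) (p : Pt (2 * l + 1)) :
    vfApply (Tc l ⟨l + i.1, by omega⟩) f p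
      = pd (iy l i) f p - p (ix l i) * pd (iz l) f p := by
  unfold vfApply Tc
  rw [Finset.sum_congr rfl (fun k _ => by
    rw [dif_neg (show ¬((⟨l + i.1, by omega⟩ : Fin (2 * l)).1 < l) by simp only; omega)])]
  have he : (⟨(⟨l + i.1, by omega⟩ : Fin (2 * l)).1 - l, by omega⟩ : Fin l) = i :=
    Fin.ext (by simp only; omega)
  rw [Finset.sum_congr rfl (fun k _ => by rw [he])]
  simp only [sub_mul, ite_mul, one_mul, zero_mul, Finset.sum_sub_distrib,
    Finset.sum_ite_eq', Finset.mem_univ, if_true]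

lemma quad_repr (m : ℕ) (c : ℝ) (b : Fin m → ℝ) (a : Fin m → Fin m → ℝ) (p : Pt m) :
    c + (∑ i, b i * p i) + ∑ i, ∑ j, a i j * p i * p j
      = c + (1/2) * ∑ k, p k * (b k + (b k + ∑ j, (a k j + a j k) * p j)) := by
  have e1 : ∀ k : Fin m, p k * (b k + (b k + ∑ j, (a k j + a j k) * p j))
      = 2 * (b k * p k) + p k * ∑ j, (a k j + a j k) * p j := fun k => by ring
  rw [Finset.sum_congr rfl fun k _ => e1 k, Finset.sum_add_distrib]
  have e2 : ∀ k : Fin m, p k * ∑ j, (a k j + a j k) * p j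
      = (∑ j, a k j * p k * p j) + ∑ j, a j k * p k * p j := fun k => by
    rw [Finset.mul_sum, ← Finset.sum_add_distrib]
    exact Finset.sum_congr rfl fun j _ => by ring
  rw [Finset.sum_congr rfl fun k _ => e2 k, Finset.sum_add_distrib]
  have e3 : ∑ k : Fin m, ∑ j : Fin m, a j k * p k * p j
      = ∑ k : Fin m, ∑ j : Fin m, a k j * p k * p j := by
    rw [Finset.sum_comm]
    exact Finset.sum_congr rfl fun k _ => Finset.sum_congr rfl fun j _ => by ring
  rw [e3, show (∑ x : Fin m, 2 * (b x * p x)) = 2 * ∑ x : Fin m, b x * p x from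
    (Finset.mul_sum _ _ _).symm]
  ring

def uD {m : ℕ} (b : Fin m → ℝ) (a : Fin m → Fin m → ℝ) (k : Fin m) (p : Pt m) : ℝ :=
  b k + ∑ j, (a k j + a j k) * p j

lemma isAff_uD {m : ℕ} (b : Fin m → ℝ) (a : Fin m → Fin m → ℝ) (k : Fin m) :
    IsAffPoly m (fun p => uD b a k p) :=
  ⟨b k, fun j => a k j + a j k, fun _ => rfl⟩

lemma isAff_coord {m : ℕ} (k : Fin m) : IsAffPoly m (fun p => p k) :=
  ⟨0, fun i => if i = k then 1 else 0, fun p => by simp⟩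

lemma pd_quad' {m : ℕ} (c : ℝ) (b : Fin m → ℝ) (a : Fin m → Fin m → ℝ) (k : Fin m) (p : Pt m) :
    pd k (fun q => c + (∑ i, b i * q i) + ∑ i, ∑ j, a i j * q i * q j) p = uD b a k p :=
  pd_quad m c b a k p

lemma quad_repr' (m : ℕ) (c : ℝ) (b : Fin m → ℝ) (a : Fin m → Fin m → ℝ) (p : Pt m) :
    c + (∑ i, b i * p i) + ∑ i, ∑ j, a i j * p i * p j
      = c + (1/2) * ∑ k, p k * (b k + uD b a k p) :=
  quad_repr m c b a p

/-- the Lagrange bracket of two polynomials of degree at most 2 in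
(z, x₁,…,x_l, y₁,…,y_l) is again a polynomial of degree at most 2. -/
theorem stmt_13 (l : ℕ) (f g : Pt (2 * l + 1) → ℝ)
    (hf : IsQuadPoly (2 * l + 1) f) (hg : IsQuadPoly (2 * l + 1) g) :
    IsQuadPoly (2 * l + 1) (lagr l f g) := by
  classical
  obtain ⟨c1, b1, a1, hf⟩ := hf
  obtain ⟨c2, b2, a2, hg⟩ := hg
  have hfe : f = fun q => c1 + (∑ i, b1 i * q i) + ∑ i, ∑ j, a1 i j * q i * q j := funext hf
  have hge : g = fun q => c2 + (∑ i, b2 i * q i) + ∑ i, ∑ j, a2 i j * q i * q j := funext hg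
  have hu : ∀ (k : Fin (2 * l + 1)) p, pd k f p = uD b1 a1 k p := fun k p => by
    rw [hfe]; exact pd_quad' c1 b1 a1 k p
  have hv : ∀ (k : Fin (2 * l + 1)) p, pd k g p = uD b2 a2 k p := fun k p => by
    rw [hge]; exact pd_quad' c2 b2 a2 k p
  have key : lagr l f g = fun p =>
      (c1 * uD b2 a2 (iz l) p - c2 * uD b1 a1 (iz l) p)
      + (1/2) * (∑ k, p k * (b1 k * uD b2 a2 (iz l) p - b2 k * uD b1 a1 (iz l) p))
      + (1/2) * (∑ i : Fin l, (uD b1 a1 (ix l i) p * uD b2 a2 (iy l i) p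
          - uD b1 a1 (iy l i) p * uD b2 a2 (ix l i) p)) := by
    funext p
    have hW : (∑ r : Fin (2 * l), ∑ s : Fin (2 * l),
          wUp l r s * vfApply (Tc l r) f p * vfApply (Tc l s) g p)
        = ∑ i : Fin l,
            (-(uD b1 a1 (ix l i) p * uD b2 a2 (iy l i) p
                - uD b1 a1 (iy l i) p * uD b2 a2 (ix l i) p)
             + (p (ix l i) * (uD b1 a1 (ix l i) p * uD b2 a2 (iz l) p
                  - uD b1 a1 (iz l) p * uD b2 a2 (ix l i) p)
              + p (iy l i) * (uD b1 a1 (iy l i) p * uD b2 a2 (iz l) p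
                  - uD b1 a1 (iz l) p * uD b2 a2 (iy l i) p))) := by
      rw [wUp_sum l (fun r => vfApply (Tc l r) f p) (fun s => vfApply (Tc l s) g p)]
      refine Finset.sum_congr rfl fun i _ => ?_
      rw [vfApply_Tc_ge l i f p, vfApply_Tc_lt l i g p, vfApply_Tc_lt l i f p,
        vfApply_Tc_ge l i g p]
      simp only [hu, hv]
      ring
    have hsplit3 : (∑ i : Fin l,
            (-(uD b1 a1 (ix l i) p * uD b2 a2 (iy l i) p
                - uD b1 a1 (iy l i) p * uD b2 a2 (ix l i) p)
             + (p (ix l i) * (uD b1 a1 (ix l i) p * uD b2 a2 (iz l) p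
                  - uD b1 a1 (iz l) p * uD b2 a2 (ix l i) p)
              + p (iy l i) * (uD b1 a1 (iy l i) p * uD b2 a2 (iz l) p
                  - uD b1 a1 (iz l) p * uD b2 a2 (iy l i) p))))
        = -(∑ i : Fin l, (uD b1 a1 (ix l i) p * uD b2 a2 (iy l i) p
                - uD b1 a1 (iy l i) p * uD b2 a2 (ix l i) p))
          + ((∑ i : Fin l, p (ix l i) * (uD b1 a1 (ix l i) p * uD b2 a2 (iz l) p
                  - uD b1 a1 (iz l) p * uD b2 a2 (ix l i) p))
            + ∑ i : Fin l, p (iy l i) * (uD b1 a1 (iy l i) p * uD b2 a2 (iz l) p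
                  - uD b1 a1 (iz l) p * uD b2 a2 (iy l i) p)) := by
      rw [Finset.sum_add_distrib, Finset.sum_add_distrib, Finset.sum_neg_distrib]
    have hsplit1 : (∑ k, p k * (b1 k + uD b1 a1 k p)) * uD b2 a2 (iz l) p
          - uD b1 a1 (iz l) p * (∑ k, p k * (b2 k + uD b2 a2 k p))
        = (∑ k, p k * (b1 k * uD b2 a2 (iz l) p - b2 k * uD b1 a1 (iz l) p))
          + ∑ k, p k * (uD b1 a1 k p * uD b2 a2 (iz l) p
              - uD b1 a1 (iz l) p * uD b2 a2 k p) := by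
      rw [Finset.sum_mul, Finset.mul_sum, ← Finset.sum_sub_distrib, ← Finset.sum_add_distrib]
      exact Finset.sum_congr rfl fun k _ => by ring
    have hsplit2 : (∑ k, p k * (uD b1 a1 k p * uD b2 a2 (iz l) p
              - uD b1 a1 (iz l) p * uD b2 a2 k p))
        = p (iz l) * (uD b1 a1 (iz l) p * uD b2 a2 (iz l) p
              - uD b1 a1 (iz l) p * uD b2 a2 (iz l) p)
          + ((∑ i : Fin l, p (ix l i) * (uD b1 a1 (ix l i) p * uD b2 a2 (iz l) p
                  - uD b1 a1 (iz l) p * uD b2 a2 (ix l i) p))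
            + ∑ i : Fin l, p (iy l i) * (uD b1 a1 (iy l i) p * uD b2 a2 (iz l) p
                  - uD b1 a1 (iz l) p * uD b2 a2 (iy l i) p)) :=
      sum_fin_split l (fun k => p k * (uD b1 a1 k p * uD b2 a2 (iz l) p
              - uD b1 a1 (iz l) p * uD b2 a2 k p))
    simp only [lagr]
    rw [hW, hsplit3, hu, hv, hf p, hg p, quad_repr' (2 * l + 1) c1 b1 a1 p,
      quad_repr' (2 * l + 1) c2 b2 a2 p]
    rw [show ∀ x y A B : ℝ, (c1 + (1/2) * A) * x - y * (c2 + (1/2) * B)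
        = c1 * x - c2 * y + (1/2) * (A * x - y * B) from fun x y A B => by ring]
    rw [hsplit1, hsplit2]
    ring
  rw [key]
  have affU : ∀ k, IsAffPoly (2 * l + 1) (fun p => uD b1 a1 k p) := isAff_uD b1 a1
  have affV : ∀ k, IsAffPoly (2 * l + 1) (fun p => uD b2 a2 k p) := isAff_uD b2 a2
  refine isQuad_add (isQuad_add ?_ ?_) ?_
  · exact (((affV (iz l)).const_mul c1).sub ((affU (iz l)).const_mul c2)).isQuad
  · refine isQuad_const_mul (isQuad_sum _ _ fun k _ => ?_) (1/2)
    exact (isAff_coord k).mulQuad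
      (((affV (iz l)).const_mul (b1 k)).sub ((affU (iz l)).const_mul (b2 k)))
  · refine isQuad_const_mul (isQuad_sum _ _ fun i _ => ?_) (1/2)
    exact isQuad_sub ((affU (ix l i)).mulQuad (affV (iy l i)))
      ((affU (iy l i)).mulQuad (affV (ix l i)))
end
end

section
/- Under the projective embedding of pgl(2l+2,ℝ) into vector fields on ℝ^{2l+1} (coordinates t¹,…,t^{2l+1} identified with x₁,…,x_l, z, y₁,…,y_l), the image of the subalgebra sp(2l+2,ℝ) ⊂ pgl(2l+2,ℝ) consists of contact vector fields for the standard contact form α = dz + Σᵢ(xᵢdyᵢ - yᵢdxᵢ); i.e., for every A ∈ sp(2l+2,ℝ), the image vector field X satisfies [X,T] ∈ ker α for all T ∈ ker α. -/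
noncomputable section

open Matrix

/-- The symplectic matrix J = [[0, -I_{l+1}],[I_{l+1}, 0]] of size 2l+2. -/
def Jmat (l : ℕ) : Matrix (Fin (2 * l + 2)) (Fin (2 * l + 2)) ℝ :=
  fun i j => if i.1 + (l + 1) = j.1 then -1 else if j.1 + (l + 1) = i.1 then 1 else 0

/-- The projective embedding of pgl(2l+2,ℝ) into vector fields on ℝ^{2l+1}: the class of
[[0,ξ],[v,B]] goes to -Σvⁱ∂_{tⁱ} - ΣBⁱ_jtʲ∂_{tⁱ} + Σξ_jtʲtⁱ∂_{tⁱ} (a general matrix is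
first normalised modulo ℝ·I so that the top-left entry vanishes). -/
def projEmb' (l : ℕ) (A : Matrix (Fin (2 * l + 2)) (Fin (2 * l + 2)) ℝ) : VF (2 * l + 1) :=
  fun i t =>
    -(A ⟨i.1 + 1, by have := i.isLt; omega⟩ ⟨0, by omega⟩) -
      (∑ j : Fin (2 * l + 1),
        (A ⟨i.1 + 1, by have := i.isLt; omega⟩ ⟨j.1 + 1, by have := j.isLt; omega⟩ -
          (if i = j then A ⟨0, by omega⟩ ⟨0, by omega⟩ else 0)) * t j) +
      (∑ j : Fin (2 * l + 1), A ⟨0, by omega⟩ ⟨j.1 + 1, by have := j.isLt; omega⟩ * t j) * t i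

/-- The coordinates t¹,…,t^{2l+1} are identified with x₁,…,x_l, z, y₁,…,y_l:
index of z. -/
def jz (l : ℕ) : Fin (2 * l + 1) := ⟨l, by omega⟩

/-- Index of xᵢ. -/
def jx (l : ℕ) (i : Fin l) : Fin (2 * l + 1) := ⟨i.1, by have := i.isLt; omega⟩

/-- Index of yᵢ. -/
def jy (l : ℕ) (i : Fin l) : Fin (2 * l + 1) := ⟨l + 1 + i.1, by have := i.isLt; omega⟩

/-- Evaluation of the standard contact form α = dz + Σ(xᵢdyᵢ - yᵢdxᵢ) in the coordinates
(x₁,…,x_l, z, y₁,…,y_l). -/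
def alphaEval' (l : ℕ) (X : VF (2 * l + 1)) (p : Pt (2 * l + 1)) : ℝ :=
  X (jz l) p + ∑ i : Fin l, (p (jx l i) * X (jy l i) p - p (jy l i) * X (jx l i) p)


/-! ### Auxiliary lemmas -/

section IndexLemmas
variable {l : ℕ}
lemma jx_eq_jx {i r : Fin l} : jx l i = jx l r ↔ i = r := by
  simp [jx, Fin.ext_iff]
lemma jy_eq_jy {i r : Fin l} : jy l i = jy l r ↔ i = r := by
  simp [jy, Fin.ext_iff]
lemma jx_ne_jy (i r : Fin l) : jx l i ≠ jy l r := by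
  have := i.isLt; simp [jx, jy, Fin.ext_iff]; omega
lemma jy_ne_jx (i r : Fin l) : jy l i ≠ jx l r := by
  have := r.isLt; simp [jx, jy, Fin.ext_iff]; omega
lemma jx_ne_jz (i : Fin l) : jx l i ≠ jz l := by
  have := i.isLt; simp [jx, jz, Fin.ext_iff]; omega
lemma jz_ne_jx (i : Fin l) : jz l ≠ jx l i := (jx_ne_jz i).symm
lemma jy_ne_jz (i : Fin l) : jy l i ≠ jz l := by
  simp [jy, jz, Fin.ext_iff]; omega
lemma jz_ne_jy (i : Fin l) : jz l ≠ jy l i := (jy_ne_jz i).symm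

lemma sumSplit {M : Type*} [AddCommMonoid M] (l : ℕ) (g : Fin (2*l+1) → M) :
    ∑ k, g k = (∑ i : Fin l, g (jx l i)) + g (jz l) + ∑ i : Fin l, g (jy l i) := by
  classical
  set f : ℕ → M := fun k => if h : k < 2*l+1 then g ⟨k, h⟩ else 0 with hf
  have h1 : ∑ k, g k = ∑ k ∈ Finset.range (2*l+1), f k := by
    rw [← Fin.sum_univ_eq_sum_range]
    exact Finset.sum_congr rfl fun k _ => by simp [hf, k.isLt]; intro h; exfalso; have := k.isLt; omega
  have h2 : ∑ i : Fin l, g (jx l i) = ∑ k ∈ Finset.range l, f k := by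
    rw [← Fin.sum_univ_eq_sum_range]
    exact Finset.sum_congr rfl fun i _ => by
      have : (i:ℕ) < 2*l+1 := by have := i.isLt; omega
      simp [hf, this, jx]; intro h; exfalso; omega
  have h3 : ∑ i : Fin l, g (jy l i) = ∑ k ∈ Finset.range l, f (l+1+k) := by
    rw [← Fin.sum_univ_eq_sum_range]
    exact Finset.sum_congr rfl fun i _ => by
      have : l+1+(i:ℕ) < 2*l+1 := by have := i.isLt; omega
      simp [hf, this, jy]; intro h; exfalso; omega
  have hl : l < 2*l+1 := by omega
  have h4 : g (jz l) = f l := by simp [hf, jz, hl]; intro h; exfalso; omega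
  have h5 : ∑ x ∈ Finset.range (1+l), f (l+x) = f l + ∑ k ∈ Finset.range l, f (l+1+k) := by
    rw [Finset.sum_range_add, Finset.sum_range_one]
    congr 1
    exact Finset.sum_congr rfl fun k _ => by congr 1; omega
  rw [h1, h2, h3, h4, show 2*l+1 = l + (1 + l) from by omega, Finset.sum_range_add, h5,
    add_assoc]
end IndexLemmas

section SpRel
variable {l : ℕ} {A : Matrix (Fin (2 * l + 2)) (Fin (2 * l + 2)) ℝ}

lemma jsingle (k j : Fin (2*l+2)) :
    Jmat l k j = (if j.1 < l+1 then (if k.1 = j.1+l+1 then 1 else 0)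
      else (if k.1 = j.1-(l+1) then -1 else 0)) := by
  have hk := k.isLt; have hj := j.isLt
  simp only [Jmat]
  split_ifs <;> first | rfl | omega
lemma jsingle' (a k : Fin (2*l+2)) :
    Jmat l a k = (if a.1 < l+1 then (if k.1 = a.1+l+1 then -1 else 0)
      else (if k.1 = a.1-(l+1) then 1 else 0)) := by
  have hk := k.isLt; have ha := a.isLt
  simp only [Jmat]
  split_ifs <;> first | rfl | omega

lemma spEntry (hA : Aᵀ * Jmat l + Jmat l * A = 0) (a b : Fin (2*l+2)) :
    (∑ k, A k a * Jmat l k b) + ∑ k, Jmat l a k * A k b = 0 := by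
  have := congrFun (congrFun hA a) b
  simpa [Matrix.add_apply, Matrix.mul_apply, Matrix.transpose_apply] using this

lemma sumJ1 (a b : Fin (2*l+2)) (hb : b.1 < l+1) :
    ∑ k, A k a * Jmat l k b = A ⟨b.1+l+1, by omega⟩ a := by
  have : ∀ k : Fin (2*l+2), A k a * Jmat l k b =
      if k = ⟨b.1+l+1, by omega⟩ then A k a else 0 := by
    intro k
    by_cases hk : k = (⟨b.1+l+1, by omega⟩ : Fin (2*l+2))
    · subst hk; rw [if_pos rfl, jsingle, if_pos hb]; simp
    · rw [if_neg hk, jsingle, if_pos hb]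
      have h2 : ¬ (k.1 = b.1+l+1) := fun hc => hk (Fin.ext hc)
      simp [h2]
  rw [Finset.sum_congr rfl fun k _ => this k, Finset.sum_ite_eq' Finset.univ]
  simp

lemma sumJ2 (a b : Fin (2*l+2)) (hb : l+1 ≤ b.1) :
    ∑ k, A k a * Jmat l k b = -A ⟨b.1-(l+1), by omega⟩ a := by
  have : ∀ k : Fin (2*l+2), A k a * Jmat l k b =
      if k = ⟨b.1-(l+1), by omega⟩ then -A k a else 0 := by
    intro k
    by_cases hk : k = (⟨b.1-(l+1), by omega⟩ : Fin (2*l+2))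
    · subst hk; rw [if_pos rfl, jsingle, if_neg (by omega)]; simp
    · rw [if_neg hk, jsingle, if_neg (by omega)]
      have h2 : ¬ (k.1 = b.1-(l+1)) := fun hc => hk (Fin.ext hc)
      simp [h2]
  rw [Finset.sum_congr rfl fun k _ => this k, Finset.sum_ite_eq' Finset.univ]
  simp

lemma sumJ3 (a b : Fin (2*l+2)) (ha : a.1 < l+1) :
    ∑ k, Jmat l a k * A k b = -A ⟨a.1+l+1, by omega⟩ b := by
  have : ∀ k : Fin (2*l+2), Jmat l a k * A k b =
      if k = ⟨a.1+l+1, by omega⟩ then -A k b else 0 := by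
    intro k
    by_cases hk : k = (⟨a.1+l+1, by omega⟩ : Fin (2*l+2))
    · subst hk; rw [if_pos rfl, jsingle', if_pos ha]; simp
    · rw [if_neg hk, jsingle', if_pos ha]
      have h2 : ¬ (k.1 = a.1+l+1) := fun hc => hk (Fin.ext hc)
      simp [h2]
  rw [Finset.sum_congr rfl fun k _ => this k, Finset.sum_ite_eq' Finset.univ]
  simp

lemma sumJ4 (a b : Fin (2*l+2)) (ha : l+1 ≤ a.1) :
    ∑ k, Jmat l a k * A k b = A ⟨a.1-(l+1), by omega⟩ b := by
  have : ∀ k : Fin (2*l+2), Jmat l a k * A k b =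
      if k = ⟨a.1-(l+1), by omega⟩ then A k b else 0 := by
    intro k
    by_cases hk : k = (⟨a.1-(l+1), by omega⟩ : Fin (2*l+2))
    · subst hk; rw [if_pos rfl, jsingle', if_neg (by omega)]; simp
    · rw [if_neg hk, jsingle', if_neg (by omega)]
      have h2 : ¬ (k.1 = a.1-(l+1)) := fun hc => hk (Fin.ext hc)
      simp [h2]
  rw [Finset.sum_congr rfl fun k _ => this k, Finset.sum_ite_eq' Finset.univ]
  simp

lemma spR1 (hA : Aᵀ * Jmat l + Jmat l * A = 0) (i j : ℕ) (hi : i < l+1) (hj : j < l+1) :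
    A ⟨i+l+1, by omega⟩ ⟨j+l+1, by omega⟩ = -A ⟨j, by omega⟩ ⟨i, by omega⟩ := by
  have h := spEntry hA ⟨i, by omega⟩ ⟨j+l+1, by omega⟩
  rw [sumJ2 _ _ (by simp only [Fin.val_mk]; omega), sumJ3 _ _ (by simp only [Fin.val_mk]; omega)] at h
  simp only [Fin.val_mk, show j+l+1-(l+1) = j from by omega] at h
  linarith
lemma spR2 (hA : Aᵀ * Jmat l + Jmat l * A = 0) (i j : ℕ) (hi : i < l+1) (hj : j < l+1) :
    A ⟨i, by omega⟩ ⟨j+l+1, by omega⟩ = A ⟨j, by omega⟩ ⟨i+l+1, by omega⟩ := by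
  have h := spEntry hA ⟨i+l+1, by omega⟩ ⟨j+l+1, by omega⟩
  rw [sumJ2 _ _ (by simp only [Fin.val_mk]; omega), sumJ4 _ _ (by simp only [Fin.val_mk]; omega)] at h
  simp only [Fin.val_mk, show j+l+1-(l+1) = j from by omega,
    show i+l+1-(l+1) = i from by omega] at h
  linarith
lemma spR3 (hA : Aᵀ * Jmat l + Jmat l * A = 0) (i j : ℕ) (hi : i < l+1) (hj : j < l+1) :
    A ⟨i+l+1, by omega⟩ ⟨j, by omega⟩ = A ⟨j+l+1, by omega⟩ ⟨i, by omega⟩ := by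
  have h := spEntry hA ⟨i, by omega⟩ ⟨j, by omega⟩
  rw [sumJ1 _ _ (by simp only [Fin.val_mk]; omega), sumJ3 _ _ (by simp only [Fin.val_mk]; omega)] at h
  simp only [Fin.val_mk] at h
  linarith
end SpRel

section PdLemmas
variable {m : ℕ} (k : Fin m) (p : Pt m)

lemma pd_const (c : ℝ) : pd k (fun _ => c) p = 0 := by simp [pd]
lemma pd_coord (j : Fin m) : pd k (fun q => q j) p = if j = k then 1 else 0 := by
  have : fderiv ℝ (fun q : Pt m => q j) p = ContinuousLinearMap.proj j :=
    (ContinuousLinearMap.proj j : Pt m →L[ℝ] ℝ).fderiv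
  simp [pd, this, Pi.single_apply]
lemma pd_add (f g : Pt m → ℝ) (hf : DifferentiableAt ℝ f p) (hg : DifferentiableAt ℝ g p) :
    pd k (fun q => f q + g q) p = pd k f p + pd k g p := by
  simp [pd, fderiv_fun_add hf hg]
lemma pd_sub (f g : Pt m → ℝ) (hf : DifferentiableAt ℝ f p) (hg : DifferentiableAt ℝ g p) :
    pd k (fun q => f q - g q) p = pd k f p - pd k g p := by
  simp [pd, fderiv_fun_sub hf hg]
lemma pd_mul (f g : Pt m → ℝ) (hf : DifferentiableAt ℝ f p) (hg : DifferentiableAt ℝ g p) :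
    pd k (fun q => f q * g q) p = pd k f p * g p + f p * pd k g p := by
  simp [pd, fderiv_fun_mul hf hg]; ring
lemma pd_sum {ι : Type*} (s : Finset ι) (f : ι → Pt m → ℝ)
    (hf : ∀ i ∈ s, DifferentiableAt ℝ (f i) p) :
    pd k (fun q => ∑ i ∈ s, f i q) p = ∑ i ∈ s, pd k (f i) p := by
  simp [pd, fderiv_fun_sum hf]
end PdLemmas

lemma pdX {l : ℕ} (A : Matrix (Fin (2 * l + 2)) (Fin (2 * l + 2)) ℝ) (k i : Fin (2*l+1))
    (p : Pt (2*l+1)) :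
    pd k (projEmb' l A i) p =
      -(A ⟨i.1 + 1, by have := i.isLt; omega⟩ ⟨k.1 + 1, by have := k.isLt; omega⟩) +
      (if i = k then A ⟨0, by omega⟩ ⟨0, by omega⟩ else 0) +
      A ⟨0, by omega⟩ ⟨k.1 + 1, by have := k.isLt; omega⟩ * p i +
      (if i = k then (∑ j : Fin (2 * l + 1),
          A ⟨0, by omega⟩ ⟨j.1 + 1, by have := j.isLt; omega⟩ * p j) else 0) := by
  unfold projEmb'
  rw [show (fun t : Pt (2*l+1) =>
      -(A ⟨i.1 + 1, by have := i.isLt; omega⟩ ⟨0, by omega⟩) -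
      (∑ j : Fin (2 * l + 1),
        (A ⟨i.1 + 1, by have := i.isLt; omega⟩ ⟨j.1 + 1, by have := j.isLt; omega⟩ -
          (if i = j then A ⟨0, by omega⟩ ⟨0, by omega⟩ else 0)) * t j) +
      (∑ j : Fin (2 * l + 1), A ⟨0, by omega⟩ ⟨j.1 + 1, by have := j.isLt; omega⟩ * t j) * t i)
    = fun t : Pt (2*l+1) =>
      ((fun t : Pt (2*l+1) => -(A ⟨i.1 + 1, by have := i.isLt; omega⟩ ⟨0, by omega⟩) -
      (∑ j : Fin (2 * l + 1),
        (A ⟨i.1 + 1, by have := i.isLt; omega⟩ ⟨j.1 + 1, by have := j.isLt; omega⟩ -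
          (if i = j then A ⟨0, by omega⟩ ⟨0, by omega⟩ else 0)) * t j)) t) +
      ((fun t : Pt (2*l+1) => (∑ j : Fin (2 * l + 1), A ⟨0, by omega⟩ ⟨j.1 + 1, by have := j.isLt; omega⟩ * t j) * t i) t) from rfl]
  rw [pd_add _ _ _ _ (by fun_prop) (by fun_prop)]
  rw [pd_sub _ _ _ _ (by fun_prop) (by fun_prop)]
  rw [pd_mul _ _ _ _ (by fun_prop) (by fun_prop)]
  rw [pd_const, pd_coord]
  rw [pd_sum _ _ _ _ (fun j _ => by fun_prop), pd_sum _ _ _ _ (fun j _ => by fun_prop)]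
  have hc : ∀ (c : ℝ) (j : Fin (2*l+1)), pd k (fun q : Pt (2*l+1) => c * q j) p
      = if j = k then c else 0 := by
    intro c j
    rw [pd_mul _ _ _ _ (by fun_prop) (by fun_prop), pd_const, pd_coord]
    by_cases h : j = k <;> simp [h]
  simp only [hc]
  rw [Finset.sum_ite_eq' Finset.univ k, Finset.sum_ite_eq' Finset.univ k]
  by_cases h : i = k <;> simp [h] <;> ring

section VfLemmas
variable {m : ℕ} (X : VF m) (p : Pt m)

lemma vf_add (f g : Pt m → ℝ) (hf : DifferentiableAt ℝ f p) (hg : DifferentiableAt ℝ g p) :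
    vfApply X (fun q => f q + g q) p = vfApply X f p + vfApply X g p := by
  unfold vfApply
  rw [← Finset.sum_add_distrib]
  exact Finset.sum_congr rfl fun k _ => by rw [pd_add k p f g hf hg]; ring
lemma vf_sub (f g : Pt m → ℝ) (hf : DifferentiableAt ℝ f p) (hg : DifferentiableAt ℝ g p) :
    vfApply X (fun q => f q - g q) p = vfApply X f p - vfApply X g p := by
  unfold vfApply
  rw [← Finset.sum_sub_distrib]
  exact Finset.sum_congr rfl fun k _ => by rw [pd_sub k p f g hf hg]; ring
lemma vf_sum {ι : Type*} (s : Finset ι) (f : ι → Pt m → ℝ)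
    (hf : ∀ i ∈ s, DifferentiableAt ℝ (f i) p) :
    vfApply X (fun q => ∑ i ∈ s, f i q) p = ∑ i ∈ s, vfApply X (f i) p := by
  unfold vfApply
  rw [Finset.sum_congr rfl fun k (_ : k ∈ Finset.univ) => by
    rw [pd_sum k p s f hf, Finset.mul_sum]]
  exact Finset.sum_comm
lemma vf_coord_mul (j : Fin m) (g : Pt m → ℝ) (hg : DifferentiableAt ℝ g p) :
    vfApply X (fun q => q j * g q) p = p j * vfApply X g p + X j p * g p := by
  unfold vfApply
  have h : ∀ k : Fin m, X k p * pd k (fun q => q j * g q) p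
      = (if j = k then X k p * g p else 0) + p j * (X k p * pd k g p) := by
    intro k
    rw [pd_mul k p _ g (by fun_prop) hg, pd_coord]
    by_cases h : j = k
    · simp [h]; ring
    · simp [h]; ring
  rw [Finset.sum_congr rfl fun k _ => h k, Finset.sum_add_distrib, ← Finset.mul_sum]
  simp [Finset.sum_ite_eq, Finset.sum_ite_eq']
  ring
end VfLemmas

/-- D-part of the would-be contact coefficient. -/
def Dfun (l : ℕ) (A : Matrix (Fin (2 * l + 2)) (Fin (2 * l + 2)) ℝ) (p : Pt (2*l+1))
    (k : Fin (2*l+1)) : ℝ :=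
  pd k (projEmb' l A (jz l)) p +
    ∑ i : Fin l, (p (jx l i) * pd k (projEmb' l A (jy l i)) p -
      p (jy l i) * pd k (projEmb' l A (jx l i)) p)
/-- C-part. -/
def Cfun (l : ℕ) (A : Matrix (Fin (2 * l + 2)) (Fin (2 * l + 2)) ℝ) (p : Pt (2*l+1))
    (k : Fin (2*l+1)) : ℝ :=
  ∑ i : Fin l, ((if jy l i = k then 1 else 0) * projEmb' l A (jx l i) p -
    (if jx l i = k then 1 else 0) * projEmb' l A (jy l i) p)
/-- coefficients of the contact form. -/
def afun (l : ℕ) (p : Pt (2*l+1)) (k : Fin (2*l+1)) : ℝ :=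
  (if k = jz l then 1 else 0) +
    ∑ i : Fin l, ((if k = jy l i then 1 else 0) * p (jx l i) -
      (if k = jx l i then 1 else 0) * p (jy l i))
/-- the multiplier. -/
def muF (l : ℕ) (A : Matrix (Fin (2 * l + 2)) (Fin (2 * l + 2)) ℝ) (p : Pt (2*l+1)) : ℝ :=
  -(A ⟨l+1, by omega⟩ ⟨l+1, by omega⟩) + A ⟨0, by omega⟩ ⟨l+1, by omega⟩ * p (jz l)
    - ∑ i : Fin l, p (jx l i) * A ⟨l+2+i.1, by have := i.isLt; omega⟩ ⟨l+1, by omega⟩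
    + ∑ i : Fin l, p (jy l i) * A ⟨i.1+1, by have := i.isLt; omega⟩ ⟨l+1, by omega⟩
    + A ⟨0, by omega⟩ ⟨0, by omega⟩
    + ∑ j : Fin (2*l+1), A ⟨0, by omega⟩ ⟨j.1+1, by have := j.isLt; omega⟩ * p j

lemma afun_jz {l : ℕ} (p : Pt (2*l+1)) : afun l p (jz l) = 1 := by
  simp [afun, jz_ne_jx, jz_ne_jy]
lemma afun_jx {l : ℕ} (p : Pt (2*l+1)) (r : Fin l) : afun l p (jx l r) = -p (jy l r) := by
  simp [afun, jx_ne_jz, jx_ne_jy, jx_eq_jx, Finset.sum_ite_eq, Finset.sum_ite_eq']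
lemma afun_jy {l : ℕ} (p : Pt (2*l+1)) (r : Fin l) : afun l p (jy l r) = p (jx l r) := by
  simp [afun, jy_ne_jz, jy_ne_jx, jy_eq_jy, Finset.sum_ite_eq, Finset.sum_ite_eq']

section Key
variable {l : ℕ} {A : Matrix (Fin (2 * l + 2)) (Fin (2 * l + 2)) ℝ}

lemma keyZ (hA : Aᵀ * Jmat l + Jmat l * A = 0) (p : Pt (2*l+1)) :
    Dfun l A p (jz l) + Cfun l A p (jz l) = muF l A p * afun l p (jz l) := by
  rw [afun_jz, mul_one]
  have c2 : Cfun l A p (jz l) = 0 := by simp [Cfun, jy_ne_jz, jx_ne_jz]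
  rw [c2, add_zero]
  unfold Dfun muF
  simp only [pdX, jy_ne_jz, jx_ne_jz, if_pos, if_neg, ite_true, ite_false, if_false]
  simp only [jz, jx, jy, Fin.val_mk, show ∀ a:ℕ, l+1+a+1 = l+2+a from fun a => by omega]
  simp only [add_zero, zero_add, mul_add, add_mul, mul_sub, sub_mul, mul_neg, neg_mul,
    Finset.sum_add_distrib, Finset.sum_sub_distrib]
  have hxy : ∑ x : Fin l, p ⟨x.1, by have := x.isLt; omega⟩ *
        (A ⟨0, by omega⟩ ⟨l+1, by omega⟩ * p ⟨l+1+x.1, by have := x.isLt; omega⟩)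
      = ∑ x : Fin l, p ⟨l+1+x.1, by have := x.isLt; omega⟩ *
        (A ⟨0, by omega⟩ ⟨l+1, by omega⟩ * p ⟨x.1, by have := x.isLt; omega⟩) :=
    Finset.sum_congr rfl fun x _ => by ring
  simp only [Finset.sum_neg_distrib]
  rw [hxy]
  ring
lemma keyX (hA : Aᵀ * Jmat l + Jmat l * A = 0) (p : Pt (2*l+1)) (r : Fin l) :
    Dfun l A p (jx l r) + Cfun l A p (jx l r) = muF l A p * afun l p (jx l r) := by
  rw [afun_jx]
  have c1 : Cfun l A p (jx l r) = -projEmb' l A (jy l r) p := by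
    simp [Cfun, jy_ne_jx, jx_eq_jx, Finset.sum_ite_eq, Finset.sum_ite_eq']
  rw [c1]
  unfold Dfun muF
  simp only [pdX]
  simp only [jz_ne_jx, jy_ne_jx, jx_eq_jx, if_neg, ite_false, if_false, add_zero, zero_add,
    mul_ite, mul_zero, ite_mul, zero_mul, sub_mul, add_mul, mul_add, mul_sub, mul_neg, neg_mul,
    Finset.sum_add_distrib, Finset.sum_sub_distrib, Finset.sum_neg_distrib,
    Finset.sum_ite_eq, Finset.sum_ite_eq', Finset.mem_univ, if_true]
  simp only [projEmb']
  rw [sumSplit l (fun j => (A ⟨(jy l r).1 + 1, by have := (jy l r).isLt; omega⟩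
      ⟨j.1 + 1, by have := j.isLt; omega⟩ -
      (if jy l r = j then A ⟨0, by omega⟩ ⟨0, by omega⟩ else 0)) * p j)]
  rw [sumSplit l (fun j => A ⟨0, by omega⟩ ⟨j.1 + 1, by have := j.isLt; omega⟩ * p j)]
  simp only [jy_eq_jy, jy_ne_jz, jy_ne_jx, if_neg, ite_false, if_false, sub_zero,
    mul_ite, mul_zero, ite_mul, zero_mul, sub_mul, add_mul, mul_add, mul_sub, mul_neg, neg_mul,
    Finset.sum_add_distrib, Finset.sum_sub_distrib, Finset.sum_neg_distrib,
    Finset.sum_ite_eq, Finset.sum_ite_eq', Finset.mem_univ, if_true]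
  simp only [jx, jy, jz, Fin.val_mk, show ∀ a:ℕ, l+1+a+1 = l+2+a from fun a => by omega]
  have harith : ∀ a:ℕ, a+1+l+1 = l+2+a := fun a => by omega
  have ra : A ⟨l+1, by omega⟩ ⟨l+1, by omega⟩ = -A ⟨0, by omega⟩ ⟨0, by omega⟩ := by
    have h := spR1 hA 0 0 (by omega) (by omega)
    simpa [Nat.zero_add] using h
  have rb2 : ∀ x : Fin l, A ⟨l+2+r.1, by have := r.isLt; omega⟩ ⟨l+2+x.1, by have := x.isLt; omega⟩
      = -A ⟨x.1+1, by have := x.isLt; omega⟩ ⟨r.1+1, by have := r.isLt; omega⟩ := by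
    intro x
    have h := spR1 hA (r.1+1) (x.1+1) (by have := r.isLt; omega) (by have := x.isLt; omega)
    simpa [harith] using h
  have r3a : A ⟨l+1, by omega⟩ ⟨r.1+1, by have := r.isLt; omega⟩
      = A ⟨l+2+r.1, by have := r.isLt; omega⟩ ⟨0, by omega⟩ := by
    have h := spR3 hA 0 (r.1+1) (by omega) (by have := r.isLt; omega)
    simpa [harith, Nat.zero_add] using h
  have rd : ∀ x : Fin l, A ⟨l+2+x.1, by have := x.isLt; omega⟩ ⟨l+1, by omega⟩
      = -A ⟨0, by omega⟩ ⟨x.1+1, by have := x.isLt; omega⟩ := by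
    intro x
    have h := spR1 hA (x.1+1) 0 (by have := x.isLt; omega) (by omega)
    simpa [harith, Nat.zero_add] using h
  have re : ∀ x : Fin l, A ⟨x.1+1, by have := x.isLt; omega⟩ ⟨l+1, by omega⟩
      = A ⟨0, by omega⟩ ⟨l+2+x.1, by have := x.isLt; omega⟩ := by
    intro x
    have h := spR2 hA (x.1+1) 0 (by have := x.isLt; omega) (by omega)
    simpa [harith, Nat.zero_add] using h
  have rsym3 : ∀ x : Fin l, A ⟨l+2+x.1, by have := x.isLt; omega⟩ ⟨r.1+1, by have := r.isLt; omega⟩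
      = A ⟨l+2+r.1, by have := r.isLt; omega⟩ ⟨x.1+1, by have := x.isLt; omega⟩ := by
    intro x
    have h := spR3 hA (x.1+1) (r.1+1) (by have := x.isLt; omega) (by have := r.isLt; omega)
    simpa [harith] using h
  simp only [ra, rb2, r3a, rd, re, rsym3, mul_neg, neg_mul, neg_neg, sub_neg_eq_add,
    Finset.sum_neg_distrib]
  have oA : ∑ x : Fin l, A ⟨l+2+r.1, by have := r.isLt; omega⟩ ⟨x.1+1, by have := x.isLt; omega⟩
        * p ⟨x.1, by have := x.isLt; omega⟩
      = ∑ x : Fin l, p ⟨x.1, by have := x.isLt; omega⟩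
        * A ⟨l+2+r.1, by have := r.isLt; omega⟩ ⟨x.1+1, by have := x.isLt; omega⟩ :=
    Finset.sum_congr rfl fun x _ => mul_comm _ _
  have oB : ∑ x : Fin l, A ⟨x.1+1, by have := x.isLt; omega⟩ ⟨r.1+1, by have := r.isLt; omega⟩
        * p ⟨l+1+x.1, by have := x.isLt; omega⟩
      = ∑ x : Fin l, p ⟨l+1+x.1, by have := x.isLt; omega⟩
        * A ⟨x.1+1, by have := x.isLt; omega⟩ ⟨r.1+1, by have := r.isLt; omega⟩ :=
    Finset.sum_congr rfl fun x _ => mul_comm _ _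
  have oC : ∑ x : Fin l, p ⟨x.1, by have := x.isLt; omega⟩ *
        (A ⟨0, by omega⟩ ⟨r.1+1, by have := r.isLt; omega⟩ * p ⟨l+1+x.1, by have := x.isLt; omega⟩)
      = ∑ x : Fin l, p ⟨l+1+x.1, by have := x.isLt; omega⟩ *
        (A ⟨0, by omega⟩ ⟨r.1+1, by have := r.isLt; omega⟩ * p ⟨x.1, by have := x.isLt; omega⟩) :=
    Finset.sum_congr rfl fun x _ => by ring
  have o5 : ∑ x : Fin l, A ⟨0, by omega⟩ ⟨x.1+1, by have := x.isLt; omega⟩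
        * p ⟨x.1, by have := x.isLt; omega⟩
      = ∑ x : Fin l, p ⟨x.1, by have := x.isLt; omega⟩
        * A ⟨0, by omega⟩ ⟨x.1+1, by have := x.isLt; omega⟩ :=
    Finset.sum_congr rfl fun x _ => mul_comm _ _
  have o6 : ∑ x : Fin l, A ⟨0, by omega⟩ ⟨l+2+x.1, by have := x.isLt; omega⟩
        * p ⟨l+1+x.1, by have := x.isLt; omega⟩
      = ∑ x : Fin l, p ⟨l+1+x.1, by have := x.isLt; omega⟩
        * A ⟨0, by omega⟩ ⟨l+2+x.1, by have := x.isLt; omega⟩ :=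
    Finset.sum_congr rfl fun x _ => mul_comm _ _
  simp only [oA, oB, oC, o5, o6]
  ring
lemma keyY (hA : Aᵀ * Jmat l + Jmat l * A = 0) (p : Pt (2*l+1)) (r : Fin l) :
    Dfun l A p (jy l r) + Cfun l A p (jy l r) = muF l A p * afun l p (jy l r) := by
  rw [afun_jy]
  have c3 : Cfun l A p (jy l r) = projEmb' l A (jx l r) p := by
    simp [Cfun, jx_ne_jy, jy_eq_jy, Finset.sum_ite_eq, Finset.sum_ite_eq']
  rw [c3]
  unfold Dfun muF
  simp only [pdX]
  simp only [jz_ne_jy, jx_ne_jy, jy_eq_jy, if_neg, ite_false, if_false, ite_true, add_zero,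
    zero_add, mul_ite, mul_zero, ite_mul, zero_mul, mul_add, add_mul, mul_sub, sub_mul,
    mul_neg, neg_mul, Finset.sum_add_distrib, Finset.sum_sub_distrib, Finset.sum_neg_distrib,
    Finset.sum_ite_eq, Finset.sum_ite_eq', Finset.mem_univ, if_true]
  simp only [projEmb']
  rw [sumSplit l (fun j => (A ⟨(jx l r).1 + 1, by have := (jx l r).isLt; omega⟩
      ⟨j.1 + 1, by have := j.isLt; omega⟩ -
      (if jx l r = j then A ⟨0, by omega⟩ ⟨0, by omega⟩ else 0)) * p j)]
  rw [sumSplit l (fun j => A ⟨0, by omega⟩ ⟨j.1 + 1, by have := j.isLt; omega⟩ * p j)]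
  simp only [jx_eq_jx, jx_ne_jz, jx_ne_jy, if_neg, ite_false, if_false, sub_zero,
    mul_ite, mul_zero, ite_mul, zero_mul, sub_mul, add_mul, mul_add, mul_sub, mul_neg, neg_mul,
    Finset.sum_add_distrib, Finset.sum_sub_distrib, Finset.sum_neg_distrib,
    Finset.sum_ite_eq, Finset.sum_ite_eq', Finset.mem_univ, if_true]
  simp only [jx, jy, jz, Fin.val_mk, show ∀ a:ℕ, l+1+a+1 = l+2+a from fun a => by omega]
  have harith : ∀ a:ℕ, a+1+l+1 = l+2+a := fun a => by omega
  have ra : A ⟨l+1, by omega⟩ ⟨l+1, by omega⟩ = -A ⟨0, by omega⟩ ⟨0, by omega⟩ := by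
    have h := spR1 hA 0 0 (by omega) (by omega)
    simpa [Nat.zero_add] using h
  have rbr : ∀ x : Fin l, A ⟨l+2+x.1, by have := x.isLt; omega⟩ ⟨l+2+r.1, by have := r.isLt; omega⟩
      = -A ⟨r.1+1, by have := r.isLt; omega⟩ ⟨x.1+1, by have := x.isLt; omega⟩ := by
    intro x
    have h := spR1 hA (x.1+1) (r.1+1) (by have := x.isLt; omega) (by have := r.isLt; omega)
    simpa [harith] using h
  have rc : A ⟨l+1, by omega⟩ ⟨l+2+r.1, by have := r.isLt; omega⟩
      = -A ⟨r.1+1, by have := r.isLt; omega⟩ ⟨0, by omega⟩ := by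
    have h := spR1 hA 0 (r.1+1) (by omega) (by have := r.isLt; omega)
    simpa [harith, Nat.zero_add] using h
  have rd : ∀ x : Fin l, A ⟨l+2+x.1, by have := x.isLt; omega⟩ ⟨l+1, by omega⟩
      = -A ⟨0, by omega⟩ ⟨x.1+1, by have := x.isLt; omega⟩ := by
    intro x
    have h := spR1 hA (x.1+1) 0 (by have := x.isLt; omega) (by omega)
    simpa [harith, Nat.zero_add] using h
  have re : ∀ x : Fin l, A ⟨x.1+1, by have := x.isLt; omega⟩ ⟨l+1, by omega⟩
      = A ⟨0, by omega⟩ ⟨l+2+x.1, by have := x.isLt; omega⟩ := by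
    intro x
    have h := spR2 hA (x.1+1) 0 (by have := x.isLt; omega) (by omega)
    simpa [harith, Nat.zero_add] using h
  have rsym : ∀ x : Fin l, A ⟨x.1+1, by have := x.isLt; omega⟩ ⟨l+2+r.1, by have := r.isLt; omega⟩
      = A ⟨r.1+1, by have := r.isLt; omega⟩ ⟨l+2+x.1, by have := x.isLt; omega⟩ := by
    intro x
    have h := spR2 hA (x.1+1) (r.1+1) (by have := x.isLt; omega) (by have := r.isLt; omega)
    simpa [harith] using h
  simp only [ra, rbr, rc, rd, re, rsym, mul_neg, neg_mul, neg_neg, sub_neg_eq_add,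
    Finset.sum_neg_distrib]
  have o1 : ∑ x : Fin l, A ⟨r.1+1, by have := r.isLt; omega⟩ ⟨x.1+1, by have := x.isLt; omega⟩
        * p ⟨x.1, by have := x.isLt; omega⟩
      = ∑ x : Fin l, p ⟨x.1, by have := x.isLt; omega⟩
        * A ⟨r.1+1, by have := r.isLt; omega⟩ ⟨x.1+1, by have := x.isLt; omega⟩ :=
    Finset.sum_congr rfl fun x _ => mul_comm _ _
  have o2 : ∑ x : Fin l, A ⟨r.1+1, by have := r.isLt; omega⟩ ⟨l+2+x.1, by have := x.isLt; omega⟩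
        * p ⟨l+1+x.1, by have := x.isLt; omega⟩
      = ∑ x : Fin l, p ⟨l+1+x.1, by have := x.isLt; omega⟩
        * A ⟨r.1+1, by have := r.isLt; omega⟩ ⟨l+2+x.1, by have := x.isLt; omega⟩ :=
    Finset.sum_congr rfl fun x _ => mul_comm _ _
  have o3 : ∑ x : Fin l, p ⟨x.1, by have := x.isLt; omega⟩ *
        (A ⟨0, by omega⟩ ⟨l+2+r.1, by have := r.isLt; omega⟩ * p ⟨l+1+x.1, by have := x.isLt; omega⟩)
      = ∑ x : Fin l, p ⟨l+1+x.1, by have := x.isLt; omega⟩ *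
        (A ⟨0, by omega⟩ ⟨l+2+r.1, by have := r.isLt; omega⟩ * p ⟨x.1, by have := x.isLt; omega⟩) :=
    Finset.sum_congr rfl fun x _ => by ring
  have o5 : ∑ x : Fin l, A ⟨0, by omega⟩ ⟨x.1+1, by have := x.isLt; omega⟩
        * p ⟨x.1, by have := x.isLt; omega⟩
      = ∑ x : Fin l, p ⟨x.1, by have := x.isLt; omega⟩
        * A ⟨0, by omega⟩ ⟨x.1+1, by have := x.isLt; omega⟩ :=
    Finset.sum_congr rfl fun x _ => mul_comm _ _
  have o6 : ∑ x : Fin l, A ⟨0, by omega⟩ ⟨l+2+x.1, by have := x.isLt; omega⟩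
        * p ⟨l+1+x.1, by have := x.isLt; omega⟩
      = ∑ x : Fin l, p ⟨l+1+x.1, by have := x.isLt; omega⟩
        * A ⟨0, by omega⟩ ⟨l+2+x.1, by have := x.isLt; omega⟩ :=
    Finset.sum_congr rfl fun x _ => mul_comm _ _
  simp only [o1, o2, o3, o5, o6]
  ring

lemma keyAll (hA : Aᵀ * Jmat l + Jmat l * A = 0) (p : Pt (2*l+1)) (k : Fin (2*l+1)) :
    Dfun l A p k + Cfun l A p k = muF l A p * afun l p k := by
  by_cases h1 : k.1 < l
  · have hk : k = jx l ⟨k.1, h1⟩ := Fin.ext rfl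
    rw [hk]; exact keyX hA p _
  · by_cases h2 : k.1 = l
    · have hk : k = jz l := Fin.ext (by simpa [jz] using h2)
      rw [hk]; exact keyZ hA p
    · have hk : k = jy l ⟨k.1 - (l+1), by have := k.isLt; omega⟩ := by
        apply Fin.ext; simp [jy]; omega
      rw [hk]; exact keyY hA p _
end Key

lemma hc_lemma {l : ℕ} (A : Matrix (Fin (2 * l + 2)) (Fin (2 * l + 2)) ℝ)
    (T : VF (2*l+1)) (p : Pt (2*l+1)) :
    ∑ i : Fin l, (projEmb' l A (jx l i) p * T (jy l i) p -
        projEmb' l A (jy l i) p * T (jx l i) p)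
      = ∑ k, T k p * Cfun l A p k := by
  rw [sumSplit l (fun k => T k p * Cfun l A p k)]
  have c1 : ∀ r : Fin l, Cfun l A p (jx l r) = -projEmb' l A (jy l r) p := by
    intro r
    simp [Cfun, jy_ne_jx, jx_eq_jx, Finset.sum_ite_eq, Finset.sum_ite_eq']
  have c2 : Cfun l A p (jz l) = 0 := by
    simp [Cfun, jy_ne_jz, jx_ne_jz]
  have c3 : ∀ r : Fin l, Cfun l A p (jy l r) = projEmb' l A (jx l r) p := by
    intro r
    simp [Cfun, jx_ne_jy, jy_eq_jy, Finset.sum_ite_eq, Finset.sum_ite_eq']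
  simp only [c2, mul_zero, add_zero]
  have e1 : ∑ r : Fin l, T (jx l r) p * Cfun l A p (jx l r)
      = ∑ r : Fin l, T (jx l r) p * -projEmb' l A (jy l r) p :=
    Finset.sum_congr rfl fun r _ => by rw [c1 r]
  have e3 : ∑ r : Fin l, T (jy l r) p * Cfun l A p (jy l r)
      = ∑ r : Fin l, T (jy l r) p * projEmb' l A (jx l r) p :=
    Finset.sum_congr rfl fun r _ => by rw [c3 r]
  rw [e1, e3, ← Finset.sum_add_distrib]
  exact Finset.sum_congr rfl fun i _ => by ring

lemma vf_swap {l : ℕ} (T : VF (2*l+1)) (p : Pt (2*l+1)) (g0 : Pt (2*l+1) → ℝ)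
    (g1 g2 : Fin l → Pt (2*l+1) → ℝ) :
    vfApply T g0 p + ∑ i : Fin l, (p (jx l i) * vfApply T (g1 i) p -
        p (jy l i) * vfApply T (g2 i) p)
      = ∑ k, T k p * (pd k g0 p + ∑ i : Fin l, (p (jx l i) * pd k (g1 i) p -
          p (jy l i) * pd k (g2 i) p)) := by
  unfold vfApply
  simp only [mul_add, Finset.sum_add_distrib]
  congr 1
  rw [Finset.sum_congr rfl fun k (_ : k ∈ (Finset.univ : Finset (Fin (2*l+1)))) => by
    rw [Finset.mul_sum]]
  rw [Finset.sum_comm]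
  exact Finset.sum_congr rfl fun i _ => by
    rw [Finset.mul_sum, Finset.mul_sum, ← Finset.sum_sub_distrib]
    exact Finset.sum_congr rfl fun k _ => by ring


theorem stmt_17 (l : ℕ) (A : Matrix (Fin (2 * l + 2)) (Fin (2 * l + 2)) ℝ)
    (hA : Aᵀ * Jmat l + Jmat l * A = 0) :
    ∀ T : VF (2 * l + 1), SmoothVF T → (∀ p, alphaEval' l T p = 0) →
      ∀ p, alphaEval' l (vfBracket (projEmb' l A) T) p = 0 := by
  intro T hTs hT p
  have hTd : ∀ (k : Fin (2*l+1)) (q : Pt (2*l+1)), DifferentiableAt ℝ (T k) q :=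
    fun k q => ((hTs k).differentiable (by simp)).differentiableAt
  have hcoord : ∀ (j : Fin (2*l+1)) (q : Pt (2*l+1)),
      DifferentiableAt ℝ (fun x : Pt (2*l+1) => x j) q := fun j q => by fun_prop
  have hsummand : ∀ (i : Fin l),
      DifferentiableAt ℝ (fun q : Pt (2*l+1) =>
        q (jx l i) * T (jy l i) q - q (jy l i) * T (jx l i) q) p :=
    fun i => ((hcoord _ p).mul (hTd _ p)).sub ((hcoord _ p).mul (hTd _ p))
  -- the contact-form evaluation of T, as a function, is zero
  have hF0 : (fun q : Pt (2*l+1) => T (jz l) q +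
      ∑ i : Fin l, (q (jx l i) * T (jy l i) q - q (jy l i) * T (jx l i) q))
      = fun _ => (0:ℝ) := funext fun q => hT q
  have hXF : vfApply (projEmb' l A) (fun q : Pt (2*l+1) => T (jz l) q +
      ∑ i : Fin l, (q (jx l i) * T (jy l i) q - q (jy l i) * T (jx l i) q)) p = 0 := by
    rw [hF0]; simp [vfApply, pd]
  have hexp : vfApply (projEmb' l A) (fun q : Pt (2*l+1) => T (jz l) q +
      ∑ i : Fin l, (q (jx l i) * T (jy l i) q - q (jy l i) * T (jx l i) q)) p
      = vfApply (projEmb' l A) (T (jz l)) p +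
        ∑ i : Fin l, ((p (jx l i) * vfApply (projEmb' l A) (T (jy l i)) p +
            projEmb' l A (jx l i) p * T (jy l i) p) -
          (p (jy l i) * vfApply (projEmb' l A) (T (jx l i)) p +
            projEmb' l A (jy l i) p * T (jx l i) p)) := by
    rw [vf_add (projEmb' l A) p _ _ (hTd _ p)
      (DifferentiableAt.fun_sum fun i _ => hsummand i)]
    rw [vf_sum (projEmb' l A) p Finset.univ _ (fun i _ => hsummand i)]
    congr 1
    refine Finset.sum_congr rfl fun i _ => ?_
    rw [vf_sub (projEmb' l A) p _ _ ((hcoord _ p).fun_mul (hTd _ p)) ((hcoord _ p).fun_mul (hTd _ p)),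
      vf_coord_mul (projEmb' l A) p _ _ (hTd _ p),
      vf_coord_mul (projEmb' l A) p _ _ (hTd _ p)]
  have hXT : vfApply (projEmb' l A) (T (jz l)) p +
      ∑ i : Fin l, (p (jx l i) * vfApply (projEmb' l A) (T (jy l i)) p -
        p (jy l i) * vfApply (projEmb' l A) (T (jx l i)) p)
      = -∑ i : Fin l, (projEmb' l A (jx l i) p * T (jy l i) p -
          projEmb' l A (jy l i) p * T (jx l i) p) := by
    have h := hexp.symm.trans hXF
    have hsplit : ∑ i : Fin l, ((p (jx l i) * vfApply (projEmb' l A) (T (jy l i)) p +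
            projEmb' l A (jx l i) p * T (jy l i) p) -
          (p (jy l i) * vfApply (projEmb' l A) (T (jx l i)) p +
            projEmb' l A (jy l i) p * T (jx l i) p))
        = (∑ i : Fin l, (p (jx l i) * vfApply (projEmb' l A) (T (jy l i)) p -
            p (jy l i) * vfApply (projEmb' l A) (T (jx l i)) p)) +
          ∑ i : Fin l, (projEmb' l A (jx l i) p * T (jy l i) p -
            projEmb' l A (jy l i) p * T (jx l i) p) := by
      rw [← Finset.sum_add_distrib]
      exact Finset.sum_congr rfl fun i _ => by ring
    rw [hsplit] at h
    linarith
  have hTX : vfApply T (projEmb' l A (jz l)) p +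
      ∑ i : Fin l, (p (jx l i) * vfApply T (projEmb' l A (jy l i)) p -
        p (jy l i) * vfApply T (projEmb' l A (jx l i)) p)
      = ∑ k, T k p * Dfun l A p k :=
    vf_swap T p _ _ _
  have hck := hc_lemma A T p
  have hasum : ∑ k, T k p * afun l p k = 0 := by
    rw [sumSplit l (fun k => T k p * afun l p k)]
    simp only [afun_jz, afun_jx, afun_jy, mul_one]
    have h := hT p
    simp only [alphaEval'] at h
    have hcomb : (∑ r : Fin l, T (jx l r) p * -p (jy l r)) +
        ∑ r : Fin l, T (jy l r) p * p (jx l r)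
        = ∑ r : Fin l, (p (jx l r) * T (jy l r) p - p (jy l r) * T (jx l r) p) := by
      rw [← Finset.sum_add_distrib]
      exact Finset.sum_congr rfl fun i _ => by ring
    linarith [hcomb]
  have hDC : (∑ k, T k p * Dfun l A p k) + ∑ k, T k p * Cfun l A p k = 0 := by
    have hterm : ∀ k : Fin (2*l+1), T k p * Dfun l A p k + T k p * Cfun l A p k
        = muF l A p * (T k p * afun l p k) := fun k => by
      rw [← mul_add, keyAll hA p k]; ring
    rw [← Finset.sum_add_distrib, Finset.sum_congr rfl fun k _ => hterm k,
      ← Finset.mul_sum, hasum, mul_zero]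
  simp only [alphaEval', vfBracket]
  have hsplit2 : ∑ i : Fin l, (p (jx l i) * (vfApply (projEmb' l A) (T (jy l i)) p -
        vfApply T (projEmb' l A (jy l i)) p) -
      p (jy l i) * (vfApply (projEmb' l A) (T (jx l i)) p -
        vfApply T (projEmb' l A (jx l i)) p))
      = (∑ i : Fin l, (p (jx l i) * vfApply (projEmb' l A) (T (jy l i)) p -
          p (jy l i) * vfApply (projEmb' l A) (T (jx l i)) p)) -
        ∑ i : Fin l, (p (jx l i) * vfApply T (projEmb' l A (jy l i)) p -
          p (jy l i) * vfApply T (projEmb' l A (jx l i)) p) := by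
    rw [← Finset.sum_sub_distrib]
    exact Finset.sum_congr rfl fun i _ => by ring
  rw [hsplit2]
  linarith [hXT, hTX, hck, hDC]
end
end
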